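/- For a real symmetric matrix X = R diag(λ(X)) Rᵀ with R orthogonal and a target spectrum μ ∈ C_n (a nondecreasing vector), the matrix X̂ = R diag(μ) Rᵀ minimizes ‖Y − X‖_F over all symmetric matrices Y whose sorted eigenvalue vector equals μ, and the minimal value is ‖μ − λ(X)‖_{ℝⁿ}. -/

import Mathlib

open Matrix BigOperators

noncomputable def frobNorm {n : ℕ} (A : Matrix (Fin n) (Fin n) ℝ) : ℝ :=
  Real.sqrt (∑ i, ∑ j, (A i j) ^ 2)

def IsOrth {n : ℕ} (R : Matrix (Fin n) (Fin n) ℝ) : Prop := R * Rᵀ = 1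

/-- Sorted (nondecreasing) vector of eigenvalues of a real symmetric matrix. -/
noncomputable def sortedEig {n : ℕ} (X : Matrix (Fin n) (Fin n) ℝ) : Fin n → ℝ :=
  if h : X.IsHermitian then h.eigenvalues ∘ Tuple.sort h.eigenvalues else 0

/-- ℓ² spectral distance between symmetric matrices. -/
noncomputable def specDist {n : ℕ} (X Y : Matrix (Fin n) (Fin n) ℝ) : ℝ :=
  Real.sqrt (∑ i, (sortedEig X i - sortedEig Y i) ^ 2)

namespace StmtAux

open Polynomial

variable {n : ℕ}

lemma scalarX_eq : Matrix.scalar (Fin n) (X : ℝ[X]) = (X : ℝ[X]) • (1 : Matrix (Fin n) (Fin n) ℝ[X]) := by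
  ext i j
  by_cases h : i = j <;> simp [Matrix.scalar_apply, Matrix.one_apply, Matrix.diagonal_apply, h]

/-- charpoly of a diagonal matrix. -/
lemma charpoly_diagonal (d : Fin n → ℝ) :
    (Matrix.diagonal d).charpoly
      = ((Finset.univ.val.map d).map (fun a => X - C a)).prod := by
  have hcm : charmatrix (Matrix.diagonal d)
      = Matrix.diagonal (fun i => (X : ℝ[X]) - C (d i)) := by
    ext i j
    by_cases h : i = j
    · subst h; simp
    · simp [Matrix.charmatrix_apply_ne _ _ _ h, Matrix.diagonal_apply_ne _ h]
  rw [Matrix.charpoly, hcm, Matrix.det_diagonal, Multiset.map_map]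
  rfl

/-- charpoly is invariant under orthogonal conjugation. -/
lemma charpoly_conj (P A : Matrix (Fin n) (Fin n) ℝ) (h : P * Pᵀ = 1) :
    (P * A * Pᵀ).charpoly = A.charpoly := by
  classical
  set Pc : Matrix (Fin n) (Fin n) ℝ[X] := P.map C with hPc
  have hPcT : Pᵀ.map C = Pcᵀ := by rw [hPc, Matrix.transpose_map]
  have hPc1 : Pc * Pcᵀ = 1 := by
    rw [hPc, ← Matrix.transpose_map, ← Matrix.map_mul, h]
    exact Matrix.map_one _ (map_zero C) (map_one C)
  have hcm : charmatrix (P * A * Pᵀ) = Pc * charmatrix A * Pcᵀ := by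
    rw [charmatrix, charmatrix, Matrix.mul_sub, Matrix.sub_mul]
    congr 1
    · rw [scalarX_eq, Matrix.mul_smul, Matrix.smul_mul, Matrix.mul_one, hPc1]
    · simp only [RingHom.mapMatrix_apply]
      rw [← hPcT, hPc, ← Matrix.map_mul, ← Matrix.map_mul]
  rw [Matrix.charpoly, Matrix.charpoly, hcm, Matrix.det_mul, Matrix.det_mul]
  have : Pc.det * Pcᵀ.det = 1 := by rw [← Matrix.det_mul, hPc1, Matrix.det_one]
  calc Pc.det * (charmatrix A).det * Pcᵀ.det
      = Pc.det * Pcᵀ.det * (charmatrix A).det := by ring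
    _ = (charmatrix A).det := by rw [this, one_mul]

lemma multiset_eq_of_charpoly (f g : Fin n → ℝ)
    (h : (Matrix.diagonal f).charpoly = (Matrix.diagonal g).charpoly) :
    Finset.univ.val.map f = Finset.univ.val.map g := by
  have hf := charpoly_diagonal f
  have hg := charpoly_diagonal g
  rw [hf, hg] at h
  have := congrArg Polynomial.roots h
  rwa [Polynomial.roots_multiset_prod_X_sub_C, Polynomial.roots_multiset_prod_X_sub_C] at this

lemma monotone_ext {f g : Fin n → ℝ} (hf : Monotone f) (hg : Monotone g)
    (h : Finset.univ.val.map f = Finset.univ.val.map g) : f = g := by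
  apply List.ofFn_injective
  refine List.Perm.eq_of_sortedLE hf.sortedLE_ofFn hg.sortedLE_ofFn ?_
  rw [← Multiset.coe_eq_coe, ← Fin.univ_val_map, ← Fin.univ_val_map]
  exact h

lemma map_comp_perm (f : Fin n → ℝ) (σ : Equiv.Perm (Fin n)) :
    Finset.univ.val.map (f ∘ σ) = Finset.univ.val.map f := by
  rw [← Multiset.map_map]
  congr 1
  have : (Finset.univ.map σ.toEmbedding) = Finset.univ := Finset.map_univ_equiv σ
  simpa [Finset.map] using congrArg Finset.val this

end StmtAux

namespace StmtAux2
open StmtAux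

variable {n : ℕ}

lemma isHerm_of_symm {Y : Matrix (Fin n) (Fin n) ℝ} (hY : Y.IsSymm) : Y.IsHermitian := by
  rw [Matrix.IsHermitian, Matrix.conjTranspose_eq_transpose_of_trivial]
  exact hY

/-- real spectral theorem, orthogonal form -/
lemma real_spectral {Y : Matrix (Fin n) (Fin n) ℝ} (hY : Y.IsHermitian) :
    ∃ V : Matrix (Fin n) (Fin n) ℝ, V * Vᵀ = 1 ∧ Vᵀ * V = 1 ∧
      Y = V * Matrix.diagonal hY.eigenvalues * Vᵀ := by
  refine ⟨(hY.eigenvectorUnitary : Matrix (Fin n) (Fin n) ℝ), ?_, ?_, ?_⟩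
  · have := (Matrix.mem_unitaryGroup_iff).mp hY.eigenvectorUnitary.2
    rwa [Matrix.star_eq_conjTranspose, Matrix.conjTranspose_eq_transpose_of_trivial] at this
  · have := (Matrix.mem_unitaryGroup_iff').mp hY.eigenvectorUnitary.2
    rwa [Matrix.star_eq_conjTranspose, Matrix.conjTranspose_eq_transpose_of_trivial] at this
  · have := hY.spectral_theorem
    rwa [Unitary.conjStarAlgAut_apply, Matrix.star_eq_conjTranspose, Matrix.conjTranspose_eq_transpose_of_trivial,
      RCLike.ofReal_real_eq_id, Function.id_comp] at this

lemma charpoly_of_decomp {A : Matrix (Fin n) (Fin n) ℝ} {V : Matrix (Fin n) (Fin n) ℝ}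
    {d : Fin n → ℝ} (hV : V * Vᵀ = 1) (hA : A = V * Matrix.diagonal d * Vᵀ) :
    A.charpoly = (Matrix.diagonal d).charpoly := by
  rw [hA]; exact charpoly_conj V _ hV

/-- The sorted eigenvalues of an orthogonal conjugate of a monotone diagonal. -/
lemma sortedEig_decomp (A V : Matrix (Fin n) (Fin n) ℝ) (hV : V * Vᵀ = 1)
    (μ : Fin n → ℝ) (hμ : Monotone μ) (hA : A = V * Matrix.diagonal μ * Vᵀ) :
    sortedEig A = μ := by
  have hAs : A.IsSymm := by
    rw [Matrix.IsSymm, hA]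
    rw [Matrix.transpose_mul, Matrix.transpose_mul, Matrix.transpose_transpose,
      Matrix.diagonal_transpose, Matrix.mul_assoc]
  have hAh : A.IsHermitian := isHerm_of_symm hAs
  rw [sortedEig, dif_pos hAh]
  obtain ⟨W, hW, hW', hWA⟩ := real_spectral hAh
  have hch : (Matrix.diagonal hAh.eigenvalues).charpoly = (Matrix.diagonal μ).charpoly := by
    rw [← charpoly_of_decomp hW hWA, ← charpoly_of_decomp hV hA]
  have hms : Finset.univ.val.map hAh.eigenvalues = Finset.univ.val.map μ :=
    multiset_eq_of_charpoly _ _ hch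
  refine monotone_ext (Tuple.monotone_sort _) hμ ?_
  rw [map_comp_perm, hms]

end StmtAux2

namespace StmtAux3
open StmtAux StmtAux2

variable {n : ℕ}

lemma frobSq_eq_trace (A : Matrix (Fin n) (Fin n) ℝ) :
    ∑ i, ∑ j, (A i j) ^ 2 = Matrix.trace (Aᵀ * A) := by
  simp only [Matrix.trace, Matrix.diag, Matrix.mul_apply, Matrix.transpose_apply, sq]
  exact Finset.sum_comm

lemma trace_conj {V : Matrix (Fin n) (Fin n) ℝ} (hV' : Vᵀ * V = 1)
    (B : Matrix (Fin n) (Fin n) ℝ) : Matrix.trace (V * B * Vᵀ) = Matrix.trace B := by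
  rw [Matrix.trace_mul_comm (V * B) Vᵀ, ← Matrix.mul_assoc, hV', Matrix.one_mul]

lemma trace_diag_mul (d : Fin n → ℝ) (M : Matrix (Fin n) (Fin n) ℝ) :
    Matrix.trace (Matrix.diagonal d * M) = ∑ i, d i * M i i := by
  simp [Matrix.trace, Matrix.diag, Matrix.diagonal_mul]

/-- the squared entries of an orthogonal matrix form a doubly stochastic matrix -/
lemma sq_entries_doublyStochastic {W : Matrix (Fin n) (Fin n) ℝ}
    (hW : W * Wᵀ = 1) (hW' : Wᵀ * W = 1) :
    Matrix.of (fun i j => W i j ^ 2) ∈ doublyStochastic ℝ (Fin n) := by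
  rw [mem_doublyStochastic_iff_sum]
  refine ⟨fun i j => sq_nonneg _, fun i => ?_, fun j => ?_⟩
  · have := congrFun (congrFun hW i) i
    simp only [Matrix.mul_apply, Matrix.transpose_apply, Matrix.one_apply_eq] at this
    simpa [sq] using this
  · have := congrFun (congrFun hW' j) j
    simp only [Matrix.mul_apply, Matrix.transpose_apply, Matrix.one_apply_eq] at this
    simpa [sq] using this

lemma rearrangement_bound (l μ : Fin n → ℝ) (hl : Monotone l) (hμ : Monotone μ)
    (ev : Fin n → ℝ) (hev : ev ∘ Tuple.sort ev = μ) (τ : Equiv.Perm (Fin n)) :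
    ∑ i, l i * ev (τ i) ≤ ∑ i, l i * μ i := by
  have hev' : ∀ j, ev j = μ ((Tuple.sort ev)⁻¹ j) := by
    intro j
    conv_rhs => rw [← hev]
    simp
  calc ∑ i, l i * ev (τ i) = ∑ i, l i * μ ((τ.trans (Tuple.sort ev)⁻¹) i) := by
        simp only [Equiv.trans_apply]
        exact Finset.sum_congr rfl fun i _ => by rw [hev' (τ i)]
    _ ≤ ∑ i, l i * μ i := (hl.monovary hμ).sum_mul_comp_perm_le_sum_mul

lemma ds_bound (l μ : Fin n → ℝ) (hl : Monotone l) (hμ : Monotone μ)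
    (ev : Fin n → ℝ) (hev : ev ∘ Tuple.sort ev = μ) {S : Matrix (Fin n) (Fin n) ℝ}
    (hS : S ∈ doublyStochastic ℝ (Fin n)) :
    ∑ i, ∑ j, l i * ev j * S i j ≤ ∑ i, l i * μ i := by
  obtain ⟨w, hw0, hw1, hwS⟩ := exists_eq_sum_perm_of_mem_doublyStochastic hS
  have hSij : ∀ i j, S i j = ∑ τ : Equiv.Perm (Fin n), w τ * (if τ i = j then 1 else 0) := by
    intro i j
    rw [← hwS]
    simp [Matrix.sum_apply, Equiv.Perm.permMatrix, PEquiv.toMatrix_toPEquiv_eq,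
      Matrix.one_apply, Equiv.toPEquiv_apply]
  have key : ∀ τ : Equiv.Perm (Fin n),
      ∑ i, ∑ j, l i * ev j * (w τ * (if τ i = j then 1 else 0))
        = w τ * ∑ i, l i * ev (τ i) := by
    intro τ
    rw [Finset.mul_sum]
    refine Finset.sum_congr rfl fun i _ => ?_
    simp only [mul_ite, mul_one, mul_zero, Finset.sum_ite_eq, Finset.mem_univ, if_true]
    ring
  calc ∑ i, ∑ j, l i * ev j * S i j
      = ∑ i, ∑ j, ∑ τ : Equiv.Perm (Fin n), l i * ev j * (w τ * (if τ i = j then 1 else 0)) := by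
        simp only [hSij, Finset.mul_sum]
    _ = ∑ τ : Equiv.Perm (Fin n), ∑ i, ∑ j, l i * ev j * (w τ * (if τ i = j then 1 else 0)) := by
        have h1 : ∀ i : Fin n,
            (∑ j, ∑ τ : Equiv.Perm (Fin n), l i * ev j * (w τ * (if τ i = j then 1 else 0)))
              = ∑ τ : Equiv.Perm (Fin n), ∑ j, l i * ev j * (w τ * (if τ i = j then 1 else 0)) :=
          fun i => Finset.sum_comm
        simp only [h1]
        exact Finset.sum_comm
    _ = ∑ τ : Equiv.Perm (Fin n), w τ * ∑ i, l i * ev (τ i) := by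
        exact Finset.sum_congr rfl fun τ _ => key τ
    _ ≤ ∑ τ : Equiv.Perm (Fin n), w τ * ∑ i, l i * μ i := by
        refine Finset.sum_le_sum fun τ _ => ?_
        exact mul_le_mul_of_nonneg_left (rearrangement_bound l μ hl hμ ev hev τ) (hw0 τ)
    _ = ∑ i, l i * μ i := by rw [← Finset.sum_mul, hw1, one_mul]

end StmtAux3

lemma conj_mul_conj {n : ℕ} {R : Matrix (Fin n) (Fin n) ℝ} (hRt : Rᵀ * R = 1)
    (A B : Matrix (Fin n) (Fin n) ℝ) :
    (R * A * Rᵀ) * (R * B * Rᵀ) = R * (A * B) * Rᵀ := by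
  have h : (R * A * Rᵀ) * (R * B * Rᵀ) = R * (A * ((Rᵀ * R) * (B * Rᵀ))) := by
    noncomm_ring
  rw [h, hRt, Matrix.one_mul]
  noncomm_ring

open StmtAux StmtAux2 StmtAux3

theorem stmt_19 {n : ℕ} (X R : Matrix (Fin n) (Fin n) ℝ) (hXs : X.IsSymm) (hR : IsOrth R)
    (l μ : Fin n → ℝ) (hl : Monotone l) (hμ : Monotone μ)
    (hXd : X = R * Matrix.diagonal l * Rᵀ) :
    sortedEig (R * Matrix.diagonal μ * Rᵀ) = μ ∧
    (∀ Y : Matrix (Fin n) (Fin n) ℝ, Y.IsSymm → sortedEig Y = μ →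
      frobNorm (R * Matrix.diagonal μ * Rᵀ - X) ≤ frobNorm (Y - X)) ∧
    frobNorm (R * Matrix.diagonal μ * Rᵀ - X) = Real.sqrt (∑ i, (μ i - l i) ^ 2) := by
  have hR1 : R * Rᵀ = 1 := hR
  have hRt : Rᵀ * R = 1 := mul_eq_one_comm.mp hR1
  -- frobenius square of a conjugated diagonal
  have hfro : ∀ v : Fin n → ℝ,
      ∑ i, ∑ j, ((R * Matrix.diagonal v * Rᵀ) i j) ^ 2 = ∑ i, (v i) ^ 2 := by
    intro v
    rw [frobSq_eq_trace]
    have ht : (R * Matrix.diagonal v * Rᵀ)ᵀ = R * Matrix.diagonal v * Rᵀ := by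
      rw [Matrix.transpose_mul, Matrix.transpose_mul, Matrix.transpose_transpose,
        Matrix.diagonal_transpose, Matrix.mul_assoc]
    rw [ht, conj_mul_conj hRt, trace_conj hRt, Matrix.diagonal_mul_diagonal,
      Matrix.trace_diagonal]
    exact Finset.sum_congr rfl fun i _ => (sq (v i)).symm ▸ rfl
  -- the hat difference
  have hdiff : R * Matrix.diagonal μ * Rᵀ - X = R * Matrix.diagonal (fun i => μ i - l i) * Rᵀ := by
    rw [hXd]
    have : Matrix.diagonal (fun i => μ i - l i) = Matrix.diagonal μ - Matrix.diagonal l := by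
      rw [Matrix.diagonal_sub]
    rw [this, Matrix.mul_sub, Matrix.sub_mul]
  have part3 : frobNorm (R * Matrix.diagonal μ * Rᵀ - X) = Real.sqrt (∑ i, (μ i - l i) ^ 2) := by
    rw [frobNorm, hdiff, hfro]
  refine ⟨sortedEig_decomp _ R hR1 μ hμ rfl, ?_, part3⟩
  intro Y hYs hYe
  have hY : Y.IsHermitian := isHerm_of_symm hYs
  rw [sortedEig, dif_pos hY] at hYe
  obtain ⟨V, hV, hV', hYd⟩ := real_spectral hY
  set ev := hY.eigenvalues with hev
  set W := Rᵀ * V with hWdef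
  have hRW : R * W = V := by rw [hWdef, ← Matrix.mul_assoc, hR1, Matrix.one_mul]
  have hWt : Wᵀ * Rᵀ = Vᵀ := by rw [← Matrix.transpose_mul, hRW]
  have hW : W * Wᵀ = 1 := by
    rw [hWdef, Matrix.transpose_mul, Matrix.transpose_transpose, Matrix.mul_assoc,
      ← Matrix.mul_assoc V Vᵀ R, hV, Matrix.one_mul, hRt]
  have hW' : Wᵀ * W = 1 := mul_eq_one_comm.mp hW
  have hYconj : Y = R * (W * Matrix.diagonal ev * Wᵀ) * Rᵀ := by
    rw [hYd]
    calc V * Matrix.diagonal ev * Vᵀ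
        = (R * W) * Matrix.diagonal ev * (Wᵀ * Rᵀ) := by rw [hRW, hWt]
      _ = R * (W * Matrix.diagonal ev * Wᵀ) * Rᵀ := by noncomm_ring
  -- trace(X*Y)
  have hXY : Matrix.trace (X * Y) = ∑ i, ∑ j, l i * ev j * (W i j ^ 2) := by
    rw [hXd, hYconj, conj_mul_conj hRt, trace_conj hRt, trace_diag_mul]
    have hentry : ∀ i, (W * Matrix.diagonal ev * Wᵀ) i i = ∑ j, (W i j * ev j) * W i j := by
      intro i
      rw [Matrix.mul_apply]
      refine Finset.sum_congr rfl fun j _ => ?_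
      rw [Matrix.mul_diagonal, Matrix.transpose_apply]
    refine Finset.sum_congr rfl fun i _ => ?_
    rw [hentry, Finset.mul_sum]
    exact Finset.sum_congr rfl fun j _ => by ring
  have hS : Matrix.of (fun i j => W i j ^ 2) ∈ doublyStochastic ℝ (Fin n) :=
    sq_entries_doublyStochastic hW hW'
  have hXYle : Matrix.trace (X * Y) ≤ ∑ i, l i * μ i := by
    rw [hXY]
    exact ds_bound l μ hl hμ ev hYe hS
  -- trace(X*X), trace(Y*Y)
  have hXX : Matrix.trace (X * X) = ∑ i, l i ^ 2 := by
    rw [hXd, conj_mul_conj hRt, trace_conj hRt, Matrix.diagonal_mul_diagonal,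
      Matrix.trace_diagonal]
    exact Finset.sum_congr rfl fun i _ => (sq (l i)).symm ▸ rfl
  have hVt : Vᵀ * V = 1 := hV'
  have hYY : Matrix.trace (Y * Y) = ∑ i, μ i ^ 2 := by
    rw [hYd, conj_mul_conj hVt, trace_conj hVt, Matrix.diagonal_mul_diagonal,
      Matrix.trace_diagonal]
    have h2 : ∑ i, μ i ^ 2 = ∑ i, ev (Tuple.sort ev i) ^ 2 := by
      refine Finset.sum_congr rfl fun i _ => ?_
      rw [← hYe]; rfl
    rw [h2, Equiv.sum_comp (Tuple.sort ev) (fun x => ev x ^ 2)]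
    exact Finset.sum_congr rfl fun i _ => (sq (ev i)) ▸ rfl
  -- frobenius square of Y - X
  have hfroYX : ∑ i, ∑ j, ((Y - X) i j) ^ 2
      = Matrix.trace (Y * Y) - 2 * Matrix.trace (X * Y) + Matrix.trace (X * X) := by
    rw [frobSq_eq_trace]
    have hts : (Y - X)ᵀ = Y - X := by rw [Matrix.transpose_sub, hYs, hXs]
    rw [hts]
    have h3 : (Y - X) * (Y - X) = Y * Y - Y * X - (X * Y - X * X) := by noncomm_ring
    rw [h3, Matrix.trace_sub, Matrix.trace_sub, Matrix.trace_sub,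
      Matrix.trace_mul_comm Y X]
    ring
  have expand : ∑ i, (μ i - l i) ^ 2
      = ∑ i, μ i ^ 2 - 2 * ∑ i, l i * μ i + ∑ i, l i ^ 2 := by
    have h1 : ∀ i : Fin n, (μ i - l i) ^ 2 = μ i ^ 2 - 2 * (l i * μ i) + l i ^ 2 :=
      fun i => by ring
    simp only [h1]
    rw [Finset.sum_add_distrib, Finset.sum_sub_distrib, Finset.mul_sum]
  have hineq : ∑ i, (μ i - l i) ^ 2 ≤ ∑ i, ∑ j, ((Y - X) i j) ^ 2 := by
    rw [hfroYX, hXX, hYY, expand]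
    linarith [hXYle]
  rw [part3, frobNorm]
  exact Real.sqrt_le_sqrt hineq
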